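/- arXiv:2412.09773 — 4 statements merged into one kernel-verified Lean document; each statement's English description precedes it below -/
import Mathlib

section
/- Let G = (V, E) be a graph with m edges, let x* ∈ {-1,1}^V be an assignment cutting OPT edges (i.e., OPT = |{(u,v) ∈ E : x*_u ≠ x*_v}|), and let (Y_v)_{v∈V} be independent ±1-valued random variables with Pr[Y_v = x*_v] = 1/2 + ε for ε ∈ (0, 1/2]. Let X = |{(u,v) ∈ E : Y_u ≠ Y_v}|. Then E[X] = (1/2 − 2ε²)m + 4ε²·OPT. In particular, if OPT ≤ m, then E[X] ≥ (1/2 + 2ε²)·OPT. -/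
/-!
For signs a, b one has 1[a ≠ b] = (1 - a b) / 2, so by independence
P(Y_u ≠ Y_v) = (1 - E[Y_u] E[Y_v]) / 2, while E[Y_v] = (2 (1/2 + ε) - 1) x*_v = 2ε x*_v.
Hence an edge is cut with probability (1 - 4ε² x*_u x*_v) / 2, which is 1/2 - 2ε² or 1/2 + 2ε²
according as x* leaves it uncut or cuts it; linearity of expectation sums this over the edges.
The inequality is then (1/2 - 2ε²)(m - OPT) ≥ 0.
-/

open MeasureTheory ProbabilityTheory Finset

section Counting

variable {Ω ι : Type*} [MeasurableSpace Ω] {μ : Measure Ω} [IsFiniteMeasure μ]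

theorem integral_card_filter (s : Finset ι) (P : ι → Ω → Prop) [∀ i ω, Decidable (P i ω)]
    (hP : ∀ i ∈ s, MeasurableSet {ω | P i ω}) :
    ∫ ω, (#(s.filter (P · ω)) : ℝ) ∂μ = ∑ i ∈ s, μ.real {ω | P i ω} := by
  have hcard : ∀ ω, (#(s.filter (P · ω)) : ℝ) = ∑ i ∈ s, {ω | P i ω}.indicator 1 ω := fun ω => by
    rw [Finset.card_filter, Nat.cast_sum]
    exact Finset.sum_congr rfl fun i _ => by by_cases h : P i ω <;> simp [h]
  simp_rw [hcard]
  rw [integral_finsetSum _ fun i hi => (integrable_const 1).indicator (hP i hi)]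
  exact Finset.sum_congr rfl fun i hi => integral_indicator_one (hP i hi)

end Counting

section Signs

variable {Ω : Type*} [MeasurableSpace Ω] {μ : Measure Ω} [IsProbabilityMeasure μ]

theorem ite_ne_eq_one_sub_mul_div_two {a b : ℤ} (ha : a = 1 ∨ a = -1) (hb : b = 1 ∨ b = -1) :
    (if a ≠ b then (1 : ℝ) else 0) = (1 - a * b) / 2 := by
  rcases ha with rfl | rfl <;> rcases hb with rfl | rfl <;> norm_num

theorem integral_intCast_of_sign {Z : Ω → ℤ} (hZm : Measurable Z)
    (hZ : ∀ ω, Z ω = 1 ∨ Z ω = -1) {a : ℤ} (ha : a = 1 ∨ a = -1) :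
    ∫ ω, (Z ω : ℝ) ∂μ = a * (2 * μ.real {ω | Z ω = a} - 1) := by
  have hA : MeasurableSet {ω | Z ω = a} := hZm (measurableSet_singleton a)
  have hZ_eq : ∀ ω, (Z ω : ℝ) = a * (2 * {ω | Z ω = a}.indicator 1 ω - 1) := fun ω => by
    rcases hZ ω with h | h <;> rcases ha with rfl | rfl <;> norm_num [h]
  simp_rw [hZ_eq]
  rw [integral_const_mul, integral_sub ((integrable_const 1).indicator hA |>.const_mul 2)
    (integrable_const 1), integral_const_mul, integral_indicator_one hA]
  simp

theorem measureReal_ne_of_indepFun_sign {Z W : Ω → ℤ} (hZm : Measurable Z) (hWm : Measurable W)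
    (hZ : ∀ ω, Z ω = 1 ∨ Z ω = -1) (hW : ∀ ω, W ω = 1 ∨ W ω = -1) (hind : IndepFun Z W μ) :
    μ.real {ω | Z ω ≠ W ω} = (1 - (∫ ω, (Z ω : ℝ) ∂μ) * ∫ ω, (W ω : ℝ) ∂μ) / 2 := by
  have hcast : IndepFun (fun ω => (Z ω : ℝ)) (fun ω => (W ω : ℝ)) μ :=
    hind.comp (measurable_of_countable _) (measurable_of_countable _)
  have hne : MeasurableSet {ω | Z ω ≠ W ω} := (measurableSet_eq_fun hZm hWm).compl
  have hprod : Integrable (fun ω => (Z ω : ℝ) * W ω) μ := by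
    refine Integrable.of_bound (C := 1) (by fun_prop) (ae_of_all _ fun ω => ?_)
    rcases hZ ω with h | h <;> rcases hW ω with h' | h' <;> simp [h, h']
  rw [← hcast.integral_fun_mul_eq_mul_integral (by fun_prop) (by fun_prop)]
  calc μ.real {ω | Z ω ≠ W ω}
      = ∫ ω, (1 - Z ω * W ω : ℝ) / 2 ∂μ := by
        rw [← integral_indicator_one hne]
        congr 1 with ω
        rw [← ite_ne_eq_one_sub_mul_div_two (hZ ω) (hW ω)]
        simp [Set.indicator_apply]
    _ = (1 - ∫ ω, (Z ω * W ω : ℝ) ∂μ) / 2 := by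
        rw [integral_div, integral_sub (integrable_const 1) hprod]
        simp

end Signs

section Cut

variable {V Ω β : Type*} [MeasurableSpace Ω] [MeasurableSpace β] [MeasurableEq β]

theorem measurableSet_not_isDiag_map {Y : V → Ω → β} (hY : ∀ v, Measurable (Y v)) (e : Sym2 V) :
    MeasurableSet {ω | ¬ (e.map (Y · ω)).IsDiag} := by
  induction e using Sym2.ind with
  | _ u v => exact (measurableSet_eq_fun (hY u) (hY v)).compl

end Cut

theorem stmt6_general {V Ω : Type*} [Fintype V]
    [MeasurableSpace Ω] (μ : Measure Ω) [IsProbabilityMeasure μ]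
    (G : SimpleGraph V) [DecidableRel G.Adj]
    (ε : ℝ) (hε0 : 0 < ε) (hε : ε ≤ 1/2)
    (xstar : V → ℤ) (hx : ∀ v, xstar v = 1 ∨ xstar v = -1)
    (Y : V → Ω → ℤ) (hYmeas : ∀ v, Measurable (Y v))
    (hYval : ∀ v ω, Y v ω = 1 ∨ Y v ω = -1)
    (hind : iIndepFun Y μ)
    (hacc : ∀ v, μ {ω | Y v ω = xstar v} = ENNReal.ofReal (1/2 + ε))
    (m OPT : ℕ)
    (hm : m = G.edgeFinset.card)
    (hOPT : OPT = (G.edgeFinset.filter (fun e => ¬ (e.map xstar).IsDiag)).card)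
    (X : Ω → ℝ)
    (hX : ∀ ω, X ω =
      ((G.edgeFinset.filter (fun e => ¬ (e.map (fun v => Y v ω)).IsDiag)).card : ℝ)) :
    (∫ ω, X ω ∂μ) = (1/2 - 2 * ε^2) * m + 4 * ε^2 * OPT ∧
      ((OPT : ℝ) ≤ m → (1/2 + 2 * ε^2) * OPT ≤ ∫ ω, X ω ∂μ) := by
  have hmean (v : V) : ∫ ω, (Y v ω : ℝ) ∂μ = 2 * ε * xstar v := by
    rw [integral_intCast_of_sign (hYmeas v) (hYval v) (hx v), measureReal_def, hacc v,
      ENNReal.toReal_ofReal (by linarith)]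
    ring
  have hedge : ∀ e ∈ G.edgeFinset, μ.real {ω | ¬ (e.map (Y · ω)).IsDiag} =
      1/2 - 2 * ε^2 + 4 * ε^2 * (if ¬ (e.map xstar).IsDiag then 1 else 0) := by
    intro e he
    induction e using Sym2.ind with
    | _ u v =>
      have huv : u ≠ v := G.ne_of_adj (G.mem_edgeFinset.mp he)
      simp only [Sym2.map_mk, Sym2.mk_isDiag_iff]
      rw [measureReal_ne_of_indepFun_sign (hYmeas u) (hYmeas v) (hYval u) (hYval v)
        (hind.indepFun huv), hmean, hmean, ite_ne_eq_one_sub_mul_div_two (hx u) (hx v)]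
      ring
  have hmain : ∫ ω, X ω ∂μ = (1/2 - 2 * ε^2) * m + 4 * ε^2 * OPT := by
    rw [integral_congr_ae (ae_of_all _ hX),
      integral_card_filter _ _ fun e _ => measurableSet_not_isDiag_map hYmeas e,
      Finset.sum_congr rfl hedge, Finset.sum_add_distrib, ← Finset.mul_sum, Finset.sum_boole,
      Finset.sum_const, hm, hOPT]
    simp only [nsmul_eq_mul]
    ring
  refine ⟨hmain, fun hOPTm => ?_⟩
  have hcoef : 0 ≤ 1/2 - 2 * ε^2 := by nlinarith
  rw [hmain]
  nlinarith [mul_nonneg hcoef (sub_nonneg.mpr hOPTm)]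

theorem stmt6 {V Ω : Type*} [Fintype V] [DecidableEq V]
    [MeasurableSpace Ω] (μ : Measure Ω) [IsProbabilityMeasure μ]
    (G : SimpleGraph V) [DecidableRel G.Adj]
    (ε : ℝ) (hε0 : 0 < ε) (hε : ε ≤ 1/2)
    (xstar : V → ℤ) (hx : ∀ v, xstar v = 1 ∨ xstar v = -1)
    (Y : V → Ω → ℤ) (hYmeas : ∀ v, Measurable (Y v))
    (hYval : ∀ v ω, Y v ω = 1 ∨ Y v ω = -1)
    (hind : iIndepFun Y μ)
    (hacc : ∀ v, μ {ω | Y v ω = xstar v} = ENNReal.ofReal (1/2 + ε))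
    (m OPT : ℕ)
    (hm : m = G.edgeFinset.card)
    (hOPT : OPT = (G.edgeFinset.filter (fun e => ¬ (e.map xstar).IsDiag)).card)
    (X : Ω → ℝ)
    (hX : ∀ ω, X ω =
      ((G.edgeFinset.filter (fun e => ¬ (e.map (fun v => Y v ω)).IsDiag)).card : ℝ)) :
    (∫ ω, X ω ∂μ) = (1/2 - 2 * ε^2) * m + 4 * ε^2 * OPT ∧
      ((OPT : ℝ) ≤ m → (1/2 + 2 * ε^2) * OPT ≤ ∫ ω, X ω ∂μ) :=
  stmt6_general μ G ε hε0 hε xstar hx Y hYmeas hYval hind hacc m OPT hm hOPT X hX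
end

section
/- Let ε ∈ (0, 1/2], δ ∈ (0,1), and let G = (V,E) be a graph with m edges, MAX-CUT value OPT, and maximum degree Δ satisfying Δ < ε²δm/4 − 1/(4ε²). Let x* be an optimal MAX-CUT assignment, and let (Y_v) be independent ±1 random variables with Pr[Y_v = x*_v] = 1/2 + ε. Let X = |{(u,v) ∈ E : Y_u ≠ Y_v}|. Then Pr[X ≤ (1/2 + ε²)·OPT] < δ. -/
/-!
Write `S v := Y v` and `σ_s := ∏ v ∈ s, S v` for a finite set of vertices `s`. Since the labels
are `±1`, an edge `e` is cut exactly when `(1 - σ_e) / 2 = 1`, so `X = ∑ e, (1 - σ_e) / 2`.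
Independence and `𝔼[S v] = 2ε x*_v` give `𝔼[X] = (1 - 4ε²) m / 2 + 4ε² OPT`, and since
`m / 2 ≤ OPT ≤ m` the gap `𝔼[X] - (1/2 + ε²) OPT` is at least `ε² (1 - 2ε²) m`.

Because `S v ^ 2 = 1`, `σ_s σ_t = σ_{s ∆ t}`, hence
`cov[σ_s, σ_t] = 𝔼[σ_{s ∆ t}] (1 - 𝔼[σ_{s ∩ t}] ^ 2)`. For two edges this is `0` if they are
disjoint, `1 - 16ε⁴` if they are equal and at most `4ε² (1 - 4ε²)` if they share one vertex.
Each edge meets at most `2Δ` edges, so `Var[X] ≤ (1 - 4ε²)(1 + 8ε²Δ) m / 4`, and Chebyshev's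
inequality together with the hypothesis on `Δ` bounds the probability by less than `δ`.
-/

open MeasureTheory ProbabilityTheory Finset
open scoped symmDiff

namespace Finset

variable {ι : Type*} [DecidableEq ι]

lemma union_eq_symmDiff_union_inter (s t : Finset ι) : s ∪ t = s ∆ t ∪ s ∩ t :=
  (symmDiff_sup_inf s t).symm

lemma disjoint_symmDiff_inter (s t : Finset ι) : Disjoint (s ∆ t) (s ∩ t) :=
  disjoint_symmDiff_inf s t

lemma prod_mul_prod_eq_prod_symmDiff_mul_sq {M : Type*} [CommMonoid M] (s t : Finset ι)
    (f : ι → M) :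
    (∏ i ∈ s, f i) * ∏ i ∈ t, f i = (∏ i ∈ s ∆ t, f i) * (∏ i ∈ s ∩ t, f i) ^ 2 := by
  rw [← prod_union_inter, union_eq_symmDiff_union_inter,
    prod_union (disjoint_symmDiff_inter s t), sq, mul_assoc]

lemma card_symmDiff_add_two_mul_card_inter (s t : Finset ι) :
    #(s ∆ t) + 2 * #(s ∩ t) = #s + #t := by
  rw [← card_union_add_card_inter, union_eq_symmDiff_union_inter,
    card_union_of_disjoint (disjoint_symmDiff_inter s t)]
  ring

end Finset

lemma sum_prod_sign_eq_zero {V : Type*} [Fintype V] [DecidableEq V] {s : Finset V}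
    (hs : s.Nonempty) : ∑ f : V → Bool, ∏ v ∈ s, (if f v then (1 : ℝ) else -1) = 0 := by
  obtain ⟨w, hw⟩ := hs
  simp_rw [← Fintype.prod_ite_mem s]
  rw [← Fintype.prod_sum fun v (b : Bool) => if v ∈ s then (if b then (1 : ℝ) else -1) else 1]
  exact prod_eq_zero (mem_univ w) (by simp [hw])

namespace SimpleGraph

variable {V : Type*} [Fintype V] [DecidableEq V] (G : SimpleGraph V) [DecidableRel G.Adj]

def cutEdges (y : V → ℤ) : Finset (Sym2 V) := G.edgeFinset.filter fun e => ¬ (e.map y).IsDiag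

lemma card_cutEdges_eq_sum {y : V → ℤ} (hy : ∀ v, y v = 1 ∨ y v = -1) :
    (#(G.cutEdges y) : ℝ) = ∑ e ∈ G.edgeFinset, (1 - ∏ v ∈ e.toFinset, (y v : ℝ)) / 2 := by
  rw [cutEdges, card_filter, Nat.cast_sum]
  refine sum_congr rfl fun e he => ?_
  induction e with
  | _ u v =>
    have huv : u ≠ v := G.ne_of_adj (mem_edgeFinset.mp he)
    simp only [Sym2.toFinset_mk_eq, prod_pair huv, Sym2.map_mk, Sym2.mk_isDiag_iff]
    rcases hy u with hu | hu <;> rcases hy v with hv | hv <;> norm_num [hu, hv]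

/- Averaging over all sign vectors: each edge is cut by exactly half of them. -/
lemma exists_card_edgeFinset_le_two_mul_card_cutEdges :
    ∃ y : V → ℤ, (∀ v, y v = 1 ∨ y v = -1) ∧ #G.edgeFinset ≤ 2 * #(G.cutEdges y) := by
  let sign (f : V → Bool) (v : V) : ℤ := if f v then 1 else -1
  have hsign (f : V → Bool) (v : V) : sign f v = 1 ∨ sign f v = -1 := by
    unfold sign; split_ifs <;> simp
  have hsum : ∑ _f : V → Bool, (#G.edgeFinset : ℝ) / 2
      = ∑ f : V → Bool, (#(G.cutEdges (sign f)) : ℝ) := by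
    simp_rw [G.card_cutEdges_eq_sum (hsign _), sum_comm (s := univ), ← sum_div, sum_sub_distrib]
    simp only [sign, Int.cast_ite, Int.cast_one, Int.cast_neg]
    rw [sum_eq_zero fun e _ =>
      sum_prod_sign_eq_zero (nonempty_iff_ne_empty.mpr e.toFinset_ne_empty)]
    simp [mul_comm]
  obtain ⟨f, -, hf⟩ := exists_le_of_sum_le univ_nonempty hsum.le
  exact ⟨sign f, hsign f, by exact_mod_cast (div_le_iff₀' two_pos).mp hf⟩

lemma card_edgeFinset_le_two_mul_card_cutEdges {x : V → ℤ}
    (hopt : ∀ y : V → ℤ, (∀ v, y v = 1 ∨ y v = -1) → #(G.cutEdges y) ≤ #(G.cutEdges x)) :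
    #G.edgeFinset ≤ 2 * #(G.cutEdges x) := by
  obtain ⟨y, hy, hy2⟩ := G.exists_card_edgeFinset_le_two_mul_card_cutEdges
  linarith [hopt y hy]

lemma card_filter_not_disjoint_toFinset_le (e : Sym2 V) :
    #(G.edgeFinset.filter fun e' => ¬ Disjoint e.toFinset e'.toFinset) ≤ 2 * G.maxDegree := by
  have hsub : G.edgeFinset.filter (fun e' => ¬ Disjoint e.toFinset e'.toFinset)
      ⊆ e.toFinset.biUnion fun v => G.incidenceFinset v := by
    intro e' he'
    obtain ⟨he', hne⟩ := mem_filter.mp he'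
    obtain ⟨v, hv, hv'⟩ := not_disjoint_iff.mp hne
    exact mem_biUnion.mpr ⟨v, hv, (G.mem_incidenceFinset v e').mpr
      ⟨mem_edgeFinset.mp he', Sym2.mem_toFinset.mp hv'⟩⟩
  calc _ ≤ ∑ v ∈ e.toFinset, #(G.incidenceFinset v) := (card_le_card hsub).trans card_biUnion_le
    _ ≤ ∑ _v ∈ e.toFinset, G.maxDegree := sum_le_sum fun v _ => by
        rw [card_incidenceFinset_eq_degree]; exact G.degree_le_maxDegree v
    _ ≤ 2 * G.maxDegree := by
        rw [sum_const, smul_eq_mul, Sym2.card_toFinset]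
        split_ifs <;> omega

lemma card_filter_toFinset_eq_le_one (e : Sym2 V) :
    #(G.edgeFinset.filter fun e' => e.toFinset = e'.toFinset) ≤ 1 := by
  refine card_le_one.mpr fun a ha b hb => Sym2.ext fun v => ?_
  rw [← Sym2.mem_toFinset, ← (mem_filter.mp ha).2, (mem_filter.mp hb).2, Sym2.mem_toFinset]

end SimpleGraph

namespace ProbabilityTheory

variable {Ω : Type*} [MeasurableSpace Ω] {μ : Measure Ω} [IsProbabilityMeasure μ]

lemma integral_intCast_of_eq_one_or_eq_neg_one {Z : Ω → ℤ} (hZ : Measurable Z)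
    (hZ1 : ∀ ω, Z ω = 1 ∨ Z ω = -1) {c : ℤ} (hc : c = 1 ∨ c = -1) :
    ∫ ω, (Z ω : ℝ) ∂μ = c * (2 * μ.real {ω | Z ω = c} - 1) := by
  have hA : MeasurableSet {ω | Z ω = c} := hZ (measurableSet_singleton c)
  have hZ' : (fun ω => (Z ω : ℝ))
      = fun ω => (c : ℝ) * (2 * {ω | Z ω = c}.indicator (1 : Ω → ℝ) ω - 1) := by
    funext ω
    rcases hZ1 ω with h | h <;> rcases hc with rfl | rfl <;> norm_num [Set.indicator, h]
  rw [hZ', integral_const_mul,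
    integral_sub ((integrable_const _).indicator hA |>.const_mul 2) (integrable_const _),
    integral_const_mul, integral_indicator_one hA]
  simp

lemma meas_le_le_variance_div_sq {X : Ω → ℝ} (hX : MemLp X 2 μ) {t : ℝ} (ht : t < μ[X]) :
    μ {ω | X ω ≤ t} ≤ ENNReal.ofReal (Var[X; μ] / (μ[X] - t) ^ 2) := by
  refine (measure_mono fun ω (hω : X ω ≤ t) => ?_).trans
    (meas_ge_le_variance_div_sq hX (sub_pos.mpr ht))
  show μ[X] - t ≤ |X ω - μ[X]|
  rw [abs_sub_comm]
  exact (sub_le_sub_left hω _).trans (le_abs_self _)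

variable {ι : Type*} {S : ι → Ω → ℝ}

omit [IsProbabilityMeasure μ] in
lemma iIndepFun.integral_finsetProd (hS : iIndepFun S μ)
    (hmeas : ∀ i, AEStronglyMeasurable (S i) μ) (s : Finset ι) :
    ∫ ω, ∏ i ∈ s, S i ω ∂μ = ∏ i ∈ s, μ[S i] := by
  simp_rw [← prod_coe_sort s]
  exact (hS.precomp Subtype.val_injective).integral_fun_prod_eq_prod_integral fun i => hmeas i

lemma memLp_finsetProd_of_abs_eq_one (hmeas : ∀ i, Measurable (S i))
    (hS1 : ∀ i ω, |S i ω| = 1) (s : Finset ι) (p : ENNReal) :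
    MemLp (fun ω => ∏ i ∈ s, S i ω) p μ := by
  refine MemLp.of_bound (measurable_prod s fun i _ => hmeas i).aestronglyMeasurable 1
    (Filter.Eventually.of_forall fun ω => ?_)
  rw [Real.norm_eq_abs, abs_prod, prod_eq_one fun i _ => hS1 i ω]

variable [DecidableEq ι]

lemma covariance_finsetProd (hS : iIndepFun S μ) (hmeas : ∀ i, Measurable (S i))
    (hS1 : ∀ i ω, |S i ω| = 1) (s t : Finset ι) :
    cov[fun ω => ∏ i ∈ s, S i ω, fun ω => ∏ i ∈ t, S i ω; μ]
      = (∏ i ∈ s ∆ t, μ[S i]) * (1 - (∏ i ∈ s ∩ t, μ[S i]) ^ 2) := by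
  have hprod (ω : Ω) : (∏ i ∈ s, S i ω) * ∏ i ∈ t, S i ω = ∏ i ∈ s ∆ t, S i ω := by
    rw [prod_mul_prod_eq_prod_symmDiff_mul_sq, ← prod_pow,
      prod_eq_one (s := s ∩ t) fun i _ => by rw [← sq_abs, hS1, one_pow], mul_one]
  have hint := hS.integral_finsetProd fun i => (hmeas i).aestronglyMeasurable
  rw [covariance_eq_sub (memLp_finsetProd_of_abs_eq_one hmeas hS1 s 2)
    (memLp_finsetProd_of_abs_eq_one hmeas hS1 t 2)]
  simp only [Pi.mul_apply, hprod, hint]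
  rw [mul_sub, mul_one, prod_mul_prod_eq_prod_symmDiff_mul_sq]

lemma covariance_finsetProd_le (hS : iIndepFun S μ) (hmeas : ∀ i, Measurable (S i))
    (hS1 : ∀ i ω, |S i ω| = 1) {β : ℝ} (hβ : ∀ i, |μ[S i]| = β) (hβ1 : β ≤ 1)
    (s t : Finset ι) :
    cov[fun ω => ∏ i ∈ s, S i ω, fun ω => ∏ i ∈ t, S i ω; μ]
      ≤ β ^ #(s ∆ t) * (1 - β ^ (2 * #(s ∩ t))) := by
  have hsq : (∏ i ∈ s ∩ t, μ[S i]) ^ 2 = β ^ (2 * #(s ∩ t)) := by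
    rw [← prod_pow, pow_mul, ← prod_const]
    exact prod_congr rfl fun i _ => by rw [← sq_abs, hβ]
  rw [covariance_finsetProd hS hmeas hS1, hsq]
  have hβ2 : 0 ≤ 1 - β ^ (2 * #(s ∩ t)) := by
    rw [← hsq, sub_nonneg, ← prod_pow]
    exact prod_le_one (fun i _ => sq_nonneg _)
      fun i _ => (sq_le_one_iff_abs_le_one _).mpr ((hβ i).trans_le hβ1)
  refine mul_le_mul_of_nonneg_right ((le_abs_self _).trans ?_) hβ2
  rw [abs_prod, prod_congr rfl fun i _ => hβ i, prod_const]

lemma covariance_finsetProd_le_of_card_eq_two (hS : iIndepFun S μ)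
    (hmeas : ∀ i, Measurable (S i)) (hS1 : ∀ i ω, |S i ω| = 1) {β : ℝ}
    (hβ : ∀ i, |μ[S i]| = β) (hβ1 : β ≤ 1) {s t : Finset ι} (hs : #s = 2) (ht : #t = 2) :
    cov[fun ω => ∏ i ∈ s, S i ω, fun ω => ∏ i ∈ t, S i ω; μ]
      ≤ (1 - β ^ 2) * ((if s = t then 1 else 0) + β ^ 2 * if ¬ Disjoint s t then 1 else 0) := by
  refine (covariance_finsetProd_le hS hmeas hS1 hβ hβ1 s t).trans_eq ?_
  have hcard := card_symmDiff_add_two_mul_card_inter s t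
  have hle : #(s ∩ t) ≤ #s := card_le_card inter_subset_left
  obtain hk | hk | hk : #(s ∩ t) = 0 ∨ #(s ∩ t) = 1 ∨ #(s ∩ t) = 2 := by omega
  · have hst : s ≠ t := by rintro rfl; simp [hs] at hk
    rw [if_neg hst, if_neg (not_not.mpr (disjoint_iff_inter_eq_empty.mpr (card_eq_zero.mp hk))),
      hk]
    ring
  · have hst : s ≠ t := by rintro rfl; simp [hs] at hk
    have hdisj : ¬ Disjoint s t := by
      rw [disjoint_iff_inter_eq_empty, ← card_eq_zero, hk]; exact one_ne_zero
    rw [if_neg hst, if_pos hdisj, hk, show #(s ∆ t) = 2 by omega]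
    ring
  · have hst : s = t :=
      (eq_of_subset_of_card_le inter_subset_left (by omega)).symm.trans
        (eq_of_subset_of_card_le inter_subset_right (by omega))
    rw [if_pos hst, if_pos (by rw [hst, disjoint_self_iff_empty, ← card_eq_zero, ht]; norm_num),
      hk, show #(s ∆ t) = 0 by omega]
    ring

end ProbabilityTheory

namespace SimpleGraph

variable {V : Type*} [Fintype V] [DecidableEq V] (G : SimpleGraph V) [DecidableRel G.Adj]
variable {Ω : Type*} [MeasurableSpace Ω] {μ : Measure Ω} [IsProbabilityMeasure μ]
  {S : V → Ω → ℝ}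

lemma variance_sum_prod_le (hS : iIndepFun S μ) (hmeas : ∀ v, Measurable (S v))
    (hS1 : ∀ v ω, |S v ω| = 1) {β : ℝ} (hβ : ∀ v, |μ[S v]| = β) (hβ1 : β ≤ 1) :
    Var[fun ω => ∑ e ∈ G.edgeFinset, ∏ v ∈ e.toFinset, S v ω; μ]
      ≤ #G.edgeFinset * ((1 - β ^ 2) * (1 + β ^ 2 * (2 * G.maxDegree))) := by
  have hcard {e : Sym2 V} (he : e ∈ G.edgeFinset) : #e.toFinset = 2 :=
    Sym2.card_toFinset_of_not_isDiag e (G.not_isDiag_of_mem_edgeSet (mem_edgeFinset.mp he))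
  rw [variance_fun_sum' fun e _ => memLp_finsetProd_of_abs_eq_one hmeas hS1 _ 2,
    ← nsmul_eq_mul, ← sum_const]
  refine sum_le_sum fun e he => ?_
  have hβ0 : 0 ≤ 1 - β ^ 2 := by
    have : 0 ≤ β := hβ (Quot.out e).1 ▸ abs_nonneg _
    nlinarith
  calc _ ≤ ∑ e' ∈ G.edgeFinset, (1 - β ^ 2) * ((if e.toFinset = e'.toFinset then 1 else 0)
          + β ^ 2 * if ¬ Disjoint e.toFinset e'.toFinset then 1 else 0) :=
        sum_le_sum fun e' he' =>
          covariance_finsetProd_le_of_card_eq_two hS hmeas hS1 hβ hβ1 (hcard he) (hcard he')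
    _ = (1 - β ^ 2) * (#(G.edgeFinset.filter fun e' => e.toFinset = e'.toFinset)
          + β ^ 2 * #(G.edgeFinset.filter fun e' => ¬ Disjoint e.toFinset e'.toFinset)) := by
        rw [← mul_sum, sum_add_distrib, ← mul_sum, card_filter, card_filter]
        push_cast; rfl
    _ ≤ (1 - β ^ 2) * (1 + β ^ 2 * (2 * G.maxDegree)) := by
        gcongr
        · exact_mod_cast G.card_filter_toFinset_eq_le_one e
        · exact_mod_cast G.card_filter_not_disjoint_toFinset_le e

lemma integral_sum_one_sub_prod_div_two (hS : iIndepFun S μ) (hmeas : ∀ v, Measurable (S v))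
    (hS1 : ∀ v ω, |S v ω| = 1) {c : ℝ} {x : V → ℝ} (hmean : ∀ v, μ[S v] = c * x v) :
    ∫ ω, ∑ e ∈ G.edgeFinset, (1 - ∏ v ∈ e.toFinset, S v ω) / 2 ∂μ
      = (1 - c ^ 2) * #G.edgeFinset / 2
        + c ^ 2 * ∑ e ∈ G.edgeFinset, (1 - ∏ v ∈ e.toFinset, x v) / 2 := by
  have hprod (e : Sym2 V) : Integrable (fun ω => ∏ v ∈ e.toFinset, S v ω) μ :=
    (memLp_finsetProd_of_abs_eq_one hmeas hS1 _ 1).integrable le_rfl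
  have hint (e : Sym2 V) : Integrable (fun ω => (1 - ∏ v ∈ e.toFinset, S v ω) / 2) μ :=
    ((integrable_const 1).sub (hprod e)).div_const 2
  have hterm : ∀ e ∈ G.edgeFinset, ∫ ω, (1 - ∏ v ∈ e.toFinset, S v ω) / 2 ∂μ
      = (1 - c ^ 2) / 2 + c ^ 2 * ((1 - ∏ v ∈ e.toFinset, x v) / 2) := fun e he => by
    have hcard : #e.toFinset = 2 :=
      Sym2.card_toFinset_of_not_isDiag e (G.not_isDiag_of_mem_edgeSet (mem_edgeFinset.mp he))
    rw [integral_div, integral_sub (integrable_const 1) (hprod e),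
      hS.integral_finsetProd fun v => (hmeas v).aestronglyMeasurable]
    simp only [hmean, prod_mul_distrib, prod_const, hcard, integral_const, probReal_univ,
      one_smul]
    ring
  rw [integral_finsetSum _ fun e _ => hint e, sum_congr rfl hterm, sum_add_distrib, sum_const,
    nsmul_eq_mul, mul_sum]
  ring

lemma memLp_sum_one_sub_prod_div_two (hmeas : ∀ v, Measurable (S v))
    (hS1 : ∀ v ω, |S v ω| = 1) (p : ENNReal) :
    MemLp (fun ω => ∑ e ∈ G.edgeFinset, (1 - ∏ v ∈ e.toFinset, S v ω) / 2) p μ := by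
  simp_rw [div_eq_mul_inv]
  exact memLp_finsetSum _ fun e _ =>
    ((memLp_const 1).sub (memLp_finsetProd_of_abs_eq_one hmeas hS1 _ p)).mul_const _

lemma variance_sum_one_sub_prod_div_two_le (hS : iIndepFun S μ)
    (hmeas : ∀ v, Measurable (S v)) (hS1 : ∀ v ω, |S v ω| = 1) {β : ℝ}
    (hβ : ∀ v, |μ[S v]| = β) (hβ1 : β ≤ 1) :
    Var[fun ω => ∑ e ∈ G.edgeFinset, (1 - ∏ v ∈ e.toFinset, S v ω) / 2; μ]
      ≤ #G.edgeFinset * ((1 - β ^ 2) * (1 + β ^ 2 * (2 * G.maxDegree))) / 4 := by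
  have hsum : (fun ω => ∑ e ∈ G.edgeFinset, (1 - ∏ v ∈ e.toFinset, S v ω) / 2)
      = fun ω => #G.edgeFinset / 2 + (-1 / 2) * ∑ e ∈ G.edgeFinset, ∏ v ∈ e.toFinset, S v ω := by
    funext ω
    rw [← sum_div, sum_sub_distrib, sum_const, nsmul_one]
    ring
  rw [hsum, variance_const_add, variance_const_mul]
  · linarith [G.variance_sum_prod_le hS hmeas hS1 hβ hβ1]
  · exact (measurable_sum _ fun e _ => measurable_prod _ fun v _ => hmeas v).aestronglyMeasurable
      |>.const_mul _

end SimpleGraph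

lemma cut_gap_pos_and_variance_bound_div_sq_lt {ε δ Δ m OPT : ℝ} (hε0 : 0 < ε) (hε : ε ≤ 1 / 2)
    (hδ0 : 0 < δ) (hΔ0 : 0 ≤ Δ) (hOPT : OPT ≤ m) (hm : m ≤ 2 * OPT)
    (hΔ : Δ < ε ^ 2 * δ * m / 4 - 1 / (4 * ε ^ 2)) :
    (1 / 2 + ε ^ 2) * OPT < (1 - (2 * ε) ^ 2) * m / 2 + (2 * ε) ^ 2 * OPT ∧
      m * ((1 - (2 * ε) ^ 2) * (1 + (2 * ε) ^ 2 * (2 * Δ))) / 4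
        / ((1 - (2 * ε) ^ 2) * m / 2 + (2 * ε) ^ 2 * OPT - (1 / 2 + ε ^ 2) * OPT) ^ 2 < δ := by
  have hkey : 1 + 4 * ε ^ 2 * Δ < ε ^ 4 * δ * m := by
    have h := mul_lt_mul_of_pos_left hΔ (by positivity : (0 : ℝ) < 4 * ε ^ 2)
    rw [mul_sub, mul_one_div_cancel (by positivity)] at h
    linarith
  have hε2 : ε ^ 2 ≤ 1 / 4 := by nlinarith
  have hm0 : 0 < m := pos_of_mul_pos_right (by nlinarith : 0 < ε ^ 4 * δ * m) (by positivity)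
  -- the gap minus `ε²(1 - 2ε²)m` is `(1 - 2ε²)(1 - 4ε²)(m - OPT)/2 + 2ε⁴(2 OPT - m)`
  have hT : ε ^ 2 * (1 - 2 * ε ^ 2) * m
      ≤ (1 - (2 * ε) ^ 2) * m / 2 + (2 * ε) ^ 2 * OPT - (1 / 2 + ε ^ 2) * OPT := by
    nlinarith [mul_nonneg (mul_nonneg (by linarith : (0 : ℝ) ≤ 1 - 2 * ε ^ 2)
      (by linarith : (0 : ℝ) ≤ 1 - 4 * ε ^ 2)) (sub_nonneg.mpr hOPT),
      mul_nonneg (pow_nonneg hε0.le 4) (by linarith : 0 ≤ 2 * OPT - m)]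
  have hT0 : 0 < ε ^ 2 * (1 - 2 * ε ^ 2) * m := by
    have : 0 < 1 - 2 * ε ^ 2 := by linarith
    positivity
  refine ⟨by linarith, (div_lt_iff₀ (pow_pos (hT0.trans_le hT) 2)).mpr ?_⟩
  calc m * ((1 - (2 * ε) ^ 2) * (1 + (2 * ε) ^ 2 * (2 * Δ))) / 4
      ≤ (1 - 2 * ε ^ 2) ^ 2 * (1 + 4 * ε ^ 2 * Δ) * m := by
        have h1 : 1 - (2 * ε) ^ 2 ≤ 2 * (1 - 2 * ε ^ 2) ^ 2 := by nlinarith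
        have h2 : 1 + (2 * ε) ^ 2 * (2 * Δ) ≤ 2 * (1 + 4 * ε ^ 2 * Δ) := by nlinarith
        have h12 := mul_le_mul h1 h2 (by positivity) (by positivity)
        nlinarith
    _ < (1 - 2 * ε ^ 2) ^ 2 * (ε ^ 4 * δ * m) * m := by gcongr; nlinarith
    _ = δ * (ε ^ 2 * (1 - 2 * ε ^ 2) * m) ^ 2 := by ring
    _ ≤ δ * ((1 - (2 * ε) ^ 2) * m / 2 + (2 * ε) ^ 2 * OPT - (1 / 2 + ε ^ 2) * OPT) ^ 2 := by
        gcongr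

theorem stmt8_general {V Ω : Type*} [Fintype V] [DecidableEq V]
    [MeasurableSpace Ω] (μ : Measure Ω) [IsProbabilityMeasure μ]
    (G : SimpleGraph V) [DecidableRel G.Adj]
    (ε δ : ℝ) (hε0 : 0 < ε) (hε : ε ≤ 1/2) (hδ0 : 0 < δ)
    (xstar : V → ℤ) (hx : ∀ v, xstar v = 1 ∨ xstar v = -1)
    -- xstar is an optimal MAX-CUT assignment
    (hopt : ∀ y : V → ℤ, (∀ v, y v = 1 ∨ y v = -1) →
      (G.edgeFinset.filter (fun e => ¬ (e.map y).IsDiag)).card ≤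
        (G.edgeFinset.filter (fun e => ¬ (e.map xstar).IsDiag)).card)
    (Y : V → Ω → ℤ) (hYmeas : ∀ v, Measurable (Y v))
    (hYval : ∀ v ω, Y v ω = 1 ∨ Y v ω = -1)
    (hind : iIndepFun Y μ)
    (hacc : ∀ v, μ {ω | Y v ω = xstar v} = ENNReal.ofReal (1/2 + ε))
    (m OPT : ℕ)
    (hm : m = G.edgeFinset.card)
    (hOPT : OPT = (G.edgeFinset.filter (fun e => ¬ (e.map xstar).IsDiag)).card)
    (hΔ : (G.maxDegree : ℝ) < ε^2 * δ * m / 4 - 1 / (4 * ε^2))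
    (X : Ω → ℝ)
    (hX : ∀ ω, X ω =
      ((G.edgeFinset.filter (fun e => ¬ (e.map (fun v => Y v ω)).IsDiag)).card : ℝ)) :
    μ {ω | X ω ≤ (1/2 + ε^2) * OPT} < ENNReal.ofReal δ := by
  set S : V → Ω → ℝ := fun v ω => Y v ω
  have hS1 (v : V) (ω : Ω) : |S v ω| = 1 := by rcases hYval v ω with h | h <;> simp [S, h]
  have hmeas (v : V) : Measurable (S v) := measurable_from_top.comp (hYmeas v)
  have hindS : iIndepFun S μ := hind.comp (fun _ z => (z : ℝ)) fun _ => measurable_from_top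
  have hmean (v : V) : μ[S v] = 2 * ε * xstar v := by
    rw [integral_intCast_of_eq_one_or_eq_neg_one (hYmeas v) (hYval v) (hx v), measureReal_def,
      hacc v, ENNReal.toReal_ofReal (by linarith)]
    ring
  have hOPT' : OPT = #(G.cutEdges xstar) := hOPT
  have hXS : X = fun ω => ∑ e ∈ G.edgeFinset, (1 - ∏ v ∈ e.toFinset, S v ω) / 2 :=
    funext fun ω => (hX ω).trans (G.card_cutEdges_eq_sum fun v => hYval v ω)
  have hEX : μ[X] = (1 - (2 * ε) ^ 2) * m / 2 + (2 * ε) ^ 2 * OPT := by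
    rw [hXS, G.integral_sum_one_sub_prod_div_two hindS hmeas hS1 hmean, hm, hOPT',
      G.card_cutEdges_eq_sum hx]
  have hVar : Var[X; μ] ≤ m * ((1 - (2 * ε) ^ 2) * (1 + (2 * ε) ^ 2 * (2 * G.maxDegree))) / 4 := by
    rw [hXS, hm]
    refine G.variance_sum_one_sub_prod_div_two_le hindS hmeas hS1 (fun v => ?_) (by linarith)
    rcases hx v with h | h <;> simp [hmean, h, abs_of_pos hε0]
  have hm2 : (m : ℝ) ≤ 2 * OPT := by
    exact_mod_cast hm ▸ hOPT' ▸ G.card_edgeFinset_le_two_mul_card_cutEdges hopt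
  have hOPTm : (OPT : ℝ) ≤ m := by exact_mod_cast hm ▸ hOPT ▸ card_filter_le _ _
  obtain ⟨hgap, hlt⟩ :=
    cut_gap_pos_and_variance_bound_div_sq_lt hε0 hε hδ0 (Nat.cast_nonneg _) hOPTm hm2 hΔ
  refine (meas_le_le_variance_div_sq (hXS ▸ G.memLp_sum_one_sub_prod_div_two hmeas hS1 2)
    (hEX ▸ hgap)).trans_lt ?_
  rw [ENNReal.ofReal_lt_ofReal_iff hδ0, hEX]
  exact lt_of_le_of_lt (by gcongr) hlt

theorem stmt8 {V Ω : Type*} [Fintype V] [DecidableEq V]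
    [MeasurableSpace Ω] (μ : Measure Ω) [IsProbabilityMeasure μ]
    (G : SimpleGraph V) [DecidableRel G.Adj]
    (ε δ : ℝ) (hε0 : 0 < ε) (hε : ε ≤ 1/2) (hδ0 : 0 < δ) (hδ1 : δ < 1)
    (xstar : V → ℤ) (hx : ∀ v, xstar v = 1 ∨ xstar v = -1)
    -- xstar is an optimal MAX-CUT assignment
    (hopt : ∀ y : V → ℤ, (∀ v, y v = 1 ∨ y v = -1) →
      (G.edgeFinset.filter (fun e => ¬ (e.map y).IsDiag)).card ≤
        (G.edgeFinset.filter (fun e => ¬ (e.map xstar).IsDiag)).card)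
    (Y : V → Ω → ℤ) (hYmeas : ∀ v, Measurable (Y v))
    (hYval : ∀ v ω, Y v ω = 1 ∨ Y v ω = -1)
    (hind : iIndepFun Y μ)
    (hacc : ∀ v, μ {ω | Y v ω = xstar v} = ENNReal.ofReal (1/2 + ε))
    (m OPT : ℕ)
    (hm : m = G.edgeFinset.card)
    (hOPT : OPT = (G.edgeFinset.filter (fun e => ¬ (e.map xstar).IsDiag)).card)
    (hΔ : (G.maxDegree : ℝ) < ε^2 * δ * m / 4 - 1 / (4 * ε^2))
    (X : Ω → ℝ)
    (hX : ∀ ω, X ω =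
      ((G.edgeFinset.filter (fun e => ¬ (e.map (fun v => Y v ω)).IsDiag)).card : ℝ)) :
    μ {ω | X ω ≤ (1/2 + ε^2) * OPT} < ENNReal.ofReal δ :=
  stmt8_general μ G ε δ hε0 hε hδ0 xstar hx hopt Y hYmeas hYval hind hacc m OPT hm hOPT hΔ X hX
end

section
/- Let ε ∈ (0, 1/2], let G be a graph with m edges and MAX-CUT value OPT, let H be the set of vertices of degree ≥ ε²m/c (for some c > 0) and L = V∖H. Suppose e(H,L) = α·OPT with α < 1/2 + ε² and m > 8c²/ε⁸. Then OPT_L > (1 − α − ε⁴)·OPT, where OPT_L is the MAX-CUT value of G[L]. -/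
/-- Number of edges of `G` with both endpoints in `S` that are cut by the
bipartition given by `x`. -/
def cutValOn {V : Type*} [Fintype V] [DecidableEq V]
    (G : SimpleGraph V) [DecidableRel G.Adj] (S : Finset V) (x : V → Bool) : ℕ :=
  (G.edgeFinset.filter (fun e => (∀ v ∈ e, v ∈ S) ∧ ¬ (e.map x).IsDiag)).card

/-- The MAX-CUT value of the induced subgraph `G[S]`. -/
def maxCutOn {V : Type*} [Fintype V] [DecidableEq V]
    (G : SimpleGraph V) [DecidableRel G.Adj] (S : Finset V) : ℕ :=
  Finset.univ.sup (fun x : V → Bool => cutValOn G S x)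

/-- Number of edges of `G` with exactly one endpoint in `H`. -/
def eBetween {V : Type*} [Fintype V] [DecidableEq V]
    (G : SimpleGraph V) [DecidableRel G.Adj] (H : Finset V) : ℕ :=
  (G.edgeFinset.filter (fun e => ¬ (e.map (fun v => decide (v ∈ H))).IsDiag)).card

section Aux

variable {V : Type*} [Fintype V] [DecidableEq V]
    (G : SimpleGraph V) [DecidableRel G.Adj]

/-- For each edge, exactly half of all assignments cut it. -/
lemma aux_half_cut {u v : V} (huv : u ≠ v) :
    2 * (Finset.univ.filter (fun x : V → Bool => ¬ (Sym2.map x s(u, v)).IsDiag)).card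
      = Fintype.card (V → Bool) := by
  have hcongr : ∀ x : V → Bool, (¬ (Sym2.map x s(u, v)).IsDiag) ↔ ¬ (x u = x v) := by
    intro x; rw [Sym2.map_pair_eq, Sym2.mk_isDiag_iff]
  have hbij : (Finset.univ.filter (fun x : V → Bool => ¬ (Sym2.map x s(u, v)).IsDiag)).card
      = (Finset.univ.filter (fun x : V → Bool => (Sym2.map x s(u, v)).IsDiag)).card := by
    refine Finset.card_bij' (fun x _ => Function.update x u (x v))
      (fun x _ => Function.update x u (!x v)) ?_ ?_ ?_ ?_
    · intro x hx
      simp only [Finset.mem_filter, Finset.mem_univ, true_and, Sym2.map_pair_eq,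
        Sym2.mk_isDiag_iff] at hx ⊢
      simp [Function.update_of_ne huv.symm]
    · intro x hx
      simp only [Finset.mem_filter, Finset.mem_univ, true_and, Sym2.map_pair_eq,
        Sym2.mk_isDiag_iff] at hx
      simp only [Finset.mem_filter, Finset.mem_univ, true_and, Sym2.map_pair_eq,
        Sym2.mk_isDiag_iff]
      simp [Function.update_of_ne huv.symm, hx]
    · intro x hx
      simp only [Finset.mem_filter, Finset.mem_univ, true_and, Sym2.map_pair_eq,
        Sym2.mk_isDiag_iff] at hx
      have hb : (!(x v)) = x u := by cases h1 : x u <;> cases h2 : x v <;> simp_all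
      rw [Function.update_of_ne huv.symm, Function.update_idem, hb, Function.update_eq_self]
    · intro x hx
      simp only [Finset.mem_filter, Finset.mem_univ, true_and, Sym2.map_pair_eq,
        Sym2.mk_isDiag_iff] at hx
      rw [Function.update_of_ne huv.symm, Function.update_idem, ← hx, Function.update_eq_self]
  have := Finset.card_filter_add_card_filter_not
    (s := (Finset.univ : Finset (V → Bool)))
    (fun x : V → Bool => ¬ (Sym2.map x s(u, v)).IsDiag)
  simp only [not_not] at this
  rw [Finset.card_univ, hbij] at this
  rw [hbij]
  omega

/-- Greedy bound: the max cut is at least half the edges. -/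
lemma aux_half_edges : G.edgeFinset.card ≤ 2 * maxCutOn G Finset.univ := by
  classical
  set N := Fintype.card (V → Bool) with hN
  have hNpos : 0 < N := Fintype.card_pos
  have hsum : ∑ x : V → Bool, cutValOn G Finset.univ x
      = ∑ e ∈ G.edgeFinset,
          (Finset.univ.filter (fun x : V → Bool => ¬ (e.map x).IsDiag)).card := by
    have h1 : ∀ x : V → Bool, cutValOn G Finset.univ x
        = ∑ e ∈ G.edgeFinset, if ¬ (e.map x).IsDiag then 1 else 0 := by
      intro x
      rw [cutValOn]
      rw [Finset.card_filter]
      apply Finset.sum_congr rfl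
      intro e he
      simp
    simp only [h1]
    rw [Finset.sum_comm]
    apply Finset.sum_congr rfl
    intro e he
    rw [Finset.card_filter]
  have hedge : ∀ e ∈ G.edgeFinset,
      2 * (Finset.univ.filter (fun x : V → Bool => ¬ (e.map x).IsDiag)).card = N := by
    intro e he
    induction e with
    | _ u v =>
      have hne : u ≠ v := by
        have := G.not_isDiag_of_mem_edgeSet (SimpleGraph.mem_edgeFinset.mp he)
        rwa [Sym2.mk_isDiag_iff] at this
      exact aux_half_cut hne
  have h2 : 2 * ∑ x : V → Bool, cutValOn G Finset.univ x = G.edgeFinset.card * N := by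
    rw [hsum, Finset.mul_sum]
    rw [Finset.sum_congr rfl hedge]
    rw [Finset.sum_const, smul_eq_mul, mul_comm]
  have h3 : ∑ x : V → Bool, cutValOn G Finset.univ x ≤ N * maxCutOn G Finset.univ := by
    calc ∑ x : V → Bool, cutValOn G Finset.univ x
        ≤ ∑ _x : V → Bool, maxCutOn G Finset.univ := by
          apply Finset.sum_le_sum
          intro x _
          exact Finset.le_sup (Finset.mem_univ x)
      _ = N * maxCutOn G Finset.univ := by
          rw [Finset.sum_const, smul_eq_mul, hN, Fintype.card]
  have : G.edgeFinset.card * N ≤ 2 * (N * maxCutOn G Finset.univ) := by omega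
  have := Nat.le_of_mul_le_mul_right (by
    calc G.edgeFinset.card * N ≤ 2 * (N * maxCutOn G Finset.univ) := this
      _ = (2 * maxCutOn G Finset.univ) * N := by ring) hNpos
  exact this

/-- Subadditivity: OPT ≤ OPT_L + OPT_H + e(H,L). -/
lemma aux_split (H : Finset V) :
    maxCutOn G Finset.univ ≤ maxCutOn G (Finset.univ \ H) + maxCutOn G H + eBetween G H := by
  classical
  rw [maxCutOn]
  apply Finset.sup_le
  intro x _
  have hsub : G.edgeFinset.filter (fun e => (∀ v ∈ e, v ∈ (Finset.univ : Finset V)) ∧ ¬ (e.map x).IsDiag)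
      ⊆ (G.edgeFinset.filter (fun e => (∀ v ∈ e, v ∈ Finset.univ \ H) ∧ ¬ (e.map x).IsDiag))
        ∪ (G.edgeFinset.filter (fun e => (∀ v ∈ e, v ∈ H) ∧ ¬ (e.map x).IsDiag))
        ∪ (G.edgeFinset.filter (fun e => ¬ (e.map (fun v => decide (v ∈ H))).IsDiag)) := by
    intro e he
    simp only [Finset.mem_filter, Finset.mem_union, Finset.mem_univ, true_and] at he ⊢
    obtain ⟨he1, _, he3⟩ := he
    induction e with
    | _ u v =>
      by_cases hu : u ∈ H <;> by_cases hv : v ∈ H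
      · left; right
        refine ⟨he1, ?_, he3⟩
        intro w hw
        rcases Sym2.mem_iff.mp hw with rfl | rfl <;> assumption
      · right
        refine ⟨he1, ?_⟩
        rw [Sym2.map_pair_eq, Sym2.mk_isDiag_iff]
        simp [hu, hv]
      · right
        refine ⟨he1, ?_⟩
        rw [Sym2.map_pair_eq, Sym2.mk_isDiag_iff]
        simp [hu, hv]
      · left; left
        refine ⟨he1, ?_, he3⟩
        intro w hw
        rcases Sym2.mem_iff.mp hw with rfl | rfl <;> simp [hu, hv]
  calc cutValOn G Finset.univ x
      ≤ cutValOn G (Finset.univ \ H) x + cutValOn G H x + eBetween G H := by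
        rw [cutValOn, cutValOn, cutValOn, eBetween]
        exact le_trans (Finset.card_le_card hsub)
          (le_trans (Finset.card_union_le _ _)
            (Nat.add_le_add_right (Finset.card_union_le _ _) _))
    _ ≤ maxCutOn G (Finset.univ \ H) + maxCutOn G H + eBetween G H := by
        gcongr <;> exact Finset.le_sup (Finset.mem_univ x)

/-- The max cut within `H` is at most `|H|^2`. -/
lemma aux_cut_H (H : Finset V) : maxCutOn G H ≤ H.card * H.card := by
  rw [maxCutOn]
  apply Finset.sup_le
  intro x _
  calc cutValOn G H x
      ≤ (G.edgeFinset.filter (fun e => ∀ v ∈ e, v ∈ H)).card := by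
        apply Finset.card_le_card
        intro e he
        simp only [Finset.mem_filter] at he ⊢
        exact ⟨he.1, he.2.1⟩
    _ ≤ H.sym2.card := by
        apply Finset.card_le_card
        intro e he
        simp only [Finset.mem_filter] at he
        exact Finset.mem_sym2_iff.mpr he.2
    _ = (H.card + 1).choose 2 := Finset.card_sym2 H
    _ = (H.card + 1) * H.card / 2 := by rw [Nat.choose_two_right, Nat.add_sub_cancel]
    _ ≤ H.card * H.card := by
        apply Nat.div_le_of_le_mul
        rcases Nat.eq_zero_or_pos H.card with h | h
        · simp [h]
        · nlinarith
end Aux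

theorem stmt12 {V : Type*} [Fintype V] [DecidableEq V]
    (G : SimpleGraph V) [DecidableRel G.Adj]
    (ε c α : ℝ) (hε0 : 0 < ε) (hε : ε ≤ 1/2) (hc : 0 < c)
    (m : ℕ) (hm : m = G.edgeFinset.card)
    (H L : Finset V)
    (hH : H = Finset.univ.filter (fun v => ε^2 * m / c ≤ (G.degree v : ℝ)))
    (hL : L = Finset.univ \ H)
    (hα : (eBetween G H : ℝ) = α * maxCutOn G Finset.univ)
    (hα' : α < 1/2 + ε^2)
    (hm' : (m : ℝ) > 8 * c^2 / ε^8) :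
    (1 - α - ε^4) * (maxCutOn G Finset.univ : ℝ) < maxCutOn G L := by
  classical
  have hε2 : (0:ℝ) < ε^2 := by positivity
  have hε4 : (0:ℝ) < ε^4 := by positivity
  have hε8 : (0:ℝ) < ε^8 := by positivity
  have hm0 : (0:ℝ) < m := lt_trans (by positivity) hm'
  -- degree bound for vertices in H
  have hdeg : ∀ v ∈ H, ε^2 * m / c ≤ (G.degree v : ℝ) := by
    intro v hv; rw [hH] at hv; simpa using hv
  -- sum of degrees over H
  have hsumtot : (H.card : ℝ) * (ε^2 * m / c) ≤ 2 * m := by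
    have h1 : (H.card : ℝ) * (ε^2 * m / c) ≤ ∑ v ∈ H, (G.degree v : ℝ) := by
      simpa [nsmul_eq_mul] using
        Finset.card_nsmul_le_sum H (fun v => (G.degree v : ℝ)) (ε^2 * m / c) hdeg
    have h2 : ∑ v ∈ H, (G.degree v : ℝ) ≤ ∑ v : V, (G.degree v : ℝ) :=
      Finset.sum_le_sum_of_subset_of_nonneg (Finset.subset_univ H)
        (fun v _ _ => by positivity)
    have h3 : ∑ v : V, (G.degree v : ℝ) = 2 * m := by
      rw [hm]
      exact_mod_cast G.sum_degrees_eq_twice_card_edges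
    linarith
  -- |H| * ε² ≤ 2c
  have hkey : (H.card : ℝ) * ε^2 ≤ 2 * c := by
    have h1 : (H.card : ℝ) * (ε^2 * m / c) * c ≤ 2 * m * c :=
      mul_le_mul_of_nonneg_right hsumtot hc.le
    have h2 : (H.card : ℝ) * (ε^2 * m / c) * c = H.card * ε^2 * m := by
      field_simp
    rw [h2] at h1
    by_contra hcon
    push_neg at hcon
    nlinarith
  -- bound on max cut inside H
  have hB : (maxCutOn G H : ℝ) * ε^4 ≤ 4 * c^2 := by
    have h1 : (maxCutOn G H : ℝ) ≤ (H.card : ℝ) * H.card := by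
      exact_mod_cast aux_cut_H G H
    have h2 : (0:ℝ) ≤ (H.card : ℝ) := Nat.cast_nonneg _
    have hx : ((H.card:ℝ)*ε^2) * ((H.card:ℝ)*ε^2) ≤ (2*c)*(2*c) :=
      mul_le_mul hkey hkey (by positivity) (by linarith)
    nlinarith [mul_le_mul_of_nonneg_right h1 hε4.le, hx]
  -- m ≤ 2 * OPT
  have hm2M : (m : ℝ) ≤ 2 * maxCutOn G Finset.univ := by
    rw [hm]; exact_mod_cast aux_half_edges G
  -- split
  have hsplit : (maxCutOn G Finset.univ : ℝ)
      ≤ maxCutOn G L + maxCutOn G H + eBetween G H := by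
    rw [hL]; exact_mod_cast aux_split G H
  -- 8c² < m ε⁸
  have h8 : 8 * c^2 < (m : ℝ) * ε^8 := (div_lt_iff₀ hε8).mp hm'
  -- OPT_H < ε⁴ OPT
  have hBM : (maxCutOn G H : ℝ) < ε^4 * maxCutOn G Finset.univ := by
    have hq : ε^8 = ε^4 * ε^4 := by ring
    nlinarith [hB, h8, hm2M, hε4]
  linarith [hsplit, hBM, hα.symm ▸ hsplit]
end

section
/- Let ε ∈ (0, 1/2], δ ∈ (0,1), c = 80/δ, and let G be a graph with m > c³δ/ε⁴ + 1/(4ε⁴) edges. Let H = {v : deg(v) ≥ ε²m/c}, L = V∖H, and suppose e(H,L) < (1/2 + ε²)·m. Let m_L and Δ_L denote the number of edges and the maximum degree of G[L]. Then Δ_L < (ε²δ/4)·m_L − 1/(4ε²). -/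
/-- Number of edges of `G` with both endpoints in `S`. -/
def edgesWithin {V : Type*} [Fintype V] [DecidableEq V]
    (G : SimpleGraph V) [DecidableRel G.Adj] (S : Finset V) : ℕ :=
  (G.edgeFinset.filter (fun e => ∀ v ∈ e, v ∈ S)).card

/-!
Vertices of `L` have degree below `t = ε²m/c`, so `Δ_L < t`. Counting degrees, `|H| t ≤ 2m`,
i.e. `|H| ≤ 2c/ε²`, hence `m_H ≤ |H|² ≤ 4c²/ε⁴`. Since `m = m_H + m_L + e(H,L)` and `ε² ≤ 1/4`,
this gives `m_L ≥ m/4 - 4c²/ε⁴`, and the lower bound on `m` makes `t` smaller than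
`(ε²δ/4) m_L - 1/(4ε²)`.
-/

open Finset

theorem Nat.cast_finset_sup_lt {ι R : Type*} [Semiring R] [LinearOrder R] [IsStrictOrderedRing R]
    {s : Finset ι} {f : ι → ℕ} {t : R} (ht : 0 < t) (hf : ∀ i ∈ s, (f i : R) < t) :
    ((s.sup f : ℕ) : R) < t := by
  rcases s.eq_empty_or_nonempty with rfl | hs
  · simpa using ht
  · obtain ⟨i, hi, hsup⟩ := s.exists_mem_eq_sup hs f
    exact hsup ▸ hf i hi

namespace SimpleGraph

variable {V : Type*} [Fintype V] (G : SimpleGraph V) [DecidableRel G.Adj]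

theorem card_mul_le_two_mul_card_edgeFinset {H : Finset V} {t : ℝ}
    (hH : ∀ v ∈ H, t ≤ G.degree v) : (#H : ℝ) * t ≤ 2 * #G.edgeFinset := by
  calc (#H : ℝ) * t ≤ ∑ v ∈ H, (G.degree v : ℝ) := by
        simpa using H.card_nsmul_le_sum _ t hH
    _ ≤ ∑ v, (G.degree v : ℝ) :=
        sum_le_sum_of_subset_of_nonneg (subset_univ H) fun _ _ _ => by positivity
    _ = 2 * #G.edgeFinset := by exact_mod_cast G.sum_degrees_eq_twice_card_edges

variable [DecidableEq V]

theorem cast_sup_card_neighborFinset_inter_lt {L : Finset V} {t : ℝ} (ht : 0 < t)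
    (hL : ∀ v ∈ L, (G.degree v : ℝ) < t) :
    ((L.sup fun v => #(G.neighborFinset v ∩ L) : ℕ) : ℝ) < t :=
  Nat.cast_finset_sup_lt ht fun v hv =>
    lt_of_le_of_lt (Nat.cast_le.2 ((card_le_card inter_subset_left).trans_eq
      (G.card_neighborFinset_eq_degree v))) (hL v hv)

theorem edgesWithin_le_card_sq (S : Finset V) : edgesWithin G S ≤ #S ^ 2 := by
  calc edgesWithin G S ≤ #((S ×ˢ S).image (fun p => s(p.1, p.2))) := by
        unfold edgesWithin
        refine Finset.card_le_card ?_
        intro e he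
        induction e using Sym2.ind with
        | _ a b =>
          have hab := (mem_filter.mp he).2
          exact mem_image.mpr
            ⟨(a, b), mem_product.mpr ⟨hab a (by simp), hab b (by simp)⟩, rfl⟩
    _ ≤ #(S ×ˢ S) := card_image_le
    _ = #S ^ 2 := by rw [card_product, sq]

theorem card_edgeFinset_eq_edgesWithin_add_edgesWithin_sdiff_add_eBetween (H : Finset V) :
    #G.edgeFinset = edgesWithin G H + edgesWithin G (univ \ H) + eBetween G H := by
  unfold edgesWithin eBetween
  rw [← card_union_of_disjoint, ← card_union_of_disjoint, filter_union_right,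
    filter_union_right]
  · congr 1
    refine (filter_true_of_mem fun e _ => ?_).symm
    induction e using Sym2.ind with
    | _ a b => by_cases ha : a ∈ H <;> by_cases hb : b ∈ H <;> simp [ha, hb]
  · rw [filter_union_right]
    refine disjoint_filter.2 fun e _ h₁ h₂ => ?_
    induction e using Sym2.ind with
    | _ a b => by_cases ha : a ∈ H <;> by_cases hb : b ∈ H <;> simp_all
  · refine disjoint_filter.2 fun e _ h₁ h₂ => ?_
    induction e using Sym2.ind with
    | _ a b => simp_all

end SimpleGraph

theorem sq_mul_div_lt_of_gt {ε c m : ℝ} (hε0 : 0 < ε) (hc0 : 0 < c)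
    (hm : 80 * c^2 / ε^4 + 1 / (4 * ε^4) < m) :
    ε^2 * m / c < 20 * ε^2 / c * (m / 4 - 4 * c^2 / ε^4) - 1 / (4 * ε^2) := by
  have hm4 : 80 * c^2 + 1 / 4 < ε^4 * m := by
    have := mul_lt_mul_of_pos_left hm (by positivity : (0 : ℝ) < ε^4)
    rwa [show ε^4 * (80 * c^2 / ε^4 + 1 / (4 * ε^4)) = 80 * c^2 + 1 / 4 by field_simp] at this
  rw [← sub_pos]
  have key : 20 * ε^2 / c * (m / 4 - 4 * c^2 / ε^4) - 1 / (4 * ε^2) - ε^2 * m / c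
      = (16 * ε^4 * m - 320 * c^2 - c) / (4 * c * ε^2) := by
    field_simp
    ring
  rw [key]
  apply div_pos _ (by positivity)
  -- `16 ε⁴ m > 1280 c² + 4 ≥ 320 c² + c`
  nlinarith [sq_nonneg (c - 1 / 16)]

theorem stmt19_general {V : Type*} [Fintype V] [DecidableEq V]
    (G : SimpleGraph V) [DecidableRel G.Adj]
    (ε δ : ℝ) (hε0 : 0 < ε) (hε : ε ≤ 1/2) (hδ0 : 0 < δ)
    (c : ℝ) (hc : c = 80 / δ)
    (m : ℕ) (hm : m = G.edgeFinset.card)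
    (hm' : (m : ℝ) > c^3 * δ / ε^4 + 1 / (4 * ε^4))
    (H L : Finset V)
    (hH : H = Finset.univ.filter (fun v => ε^2 * m / c ≤ (G.degree v : ℝ)))
    (hL : L = Finset.univ \ H)
    (hHL : (eBetween G H : ℝ) < (1/2 + ε^2) * m)
    (mL ΔL : ℕ)
    (hmL : mL = edgesWithin G L)
    (hΔL : ΔL = L.sup (fun v => ((G.neighborFinset v) ∩ L).card)) :
    (ΔL : ℝ) < ε^2 * δ / 4 * mL - 1 / (4 * ε^2) := by
  have hc0 : 0 < c := hc ▸ by positivity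
  have hcδ : c * δ = 80 := by rw [hc]; field_simp
  have hm80 : 80 * c^2 / ε^4 + 1 / (4 * ε^4) < m := by
    rwa [show 80 * c^2 = c^3 * δ by linear_combination -c^2 * hcδ]
  have hm0 : (0 : ℝ) < m := lt_trans (by positivity) hm80
  have hHdeg : ∀ v ∈ H, ε^2 * m / c ≤ G.degree v := fun v hv => by simpa [hH] using hv
  have hLdeg : ∀ v ∈ L, (G.degree v : ℝ) < ε^2 * m / c := fun v hv => by
    simpa [hL, hH] using hv
  have hΔ : (ΔL : ℝ) < ε^2 * m / c :=
    hΔL ▸ G.cast_sup_card_neighborFinset_inter_lt (by positivity) hLdeg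
  have hHcard : (#H : ℝ) * ε^2 ≤ 2 * c := by
    have := G.card_mul_le_two_mul_card_edgeFinset hHdeg
    rw [← hm, ← mul_div_assoc, div_le_iff₀ hc0] at this
    exact le_of_mul_le_mul_right (by linarith) hm0
  have hmH : (edgesWithin G H : ℝ) ≤ 4 * c^2 / ε^4 := by
    rw [le_div_iff₀ (by positivity)]
    calc (edgesWithin G H : ℝ) * ε^4 ≤ #H ^ 2 * ε^4 := by
          gcongr; exact_mod_cast G.edgesWithin_le_card_sq H
      _ = (#H * ε^2) ^ 2 := by ring
      _ ≤ (2 * c) ^ 2 := by gcongr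
      _ = 4 * c^2 := by ring
  have hmL' : (m : ℝ) / 4 - 4 * c^2 / ε^4 ≤ mL := by
    have hpart := G.card_edgeFinset_eq_edgesWithin_add_edgesWithin_sdiff_add_eBetween H
    rw [← hm, ← hL, ← hmL] at hpart
    have hε2 : ε^2 ≤ 1 / 4 := by nlinarith
    have : (m : ℝ) = edgesWithin G H + mL + eBetween G H := by exact_mod_cast hpart
    linarith [mul_le_mul_of_nonneg_right hε2 hm0.le]
  calc (ΔL : ℝ) < ε^2 * m / c := hΔ
    _ < 20 * ε^2 / c * (m / 4 - 4 * c^2 / ε^4) - 1 / (4 * ε^2) :=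
      sq_mul_div_lt_of_gt hε0 hc0 hm80
    _ ≤ 20 * ε^2 / c * mL - 1 / (4 * ε^2) := by gcongr
    _ = ε^2 * δ / 4 * mL - 1 / (4 * ε^2) := by
      rw [show δ = 80 / c by field_simp; linarith]
      ring

theorem stmt19 {V : Type*} [Fintype V] [DecidableEq V]
    (G : SimpleGraph V) [DecidableRel G.Adj]
    (ε δ : ℝ) (hε0 : 0 < ε) (hε : ε ≤ 1/2) (hδ0 : 0 < δ) (hδ1 : δ < 1)
    (c : ℝ) (hc : c = 80 / δ)
    (m : ℕ) (hm : m = G.edgeFinset.card)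
    (hm' : (m : ℝ) > c^3 * δ / ε^4 + 1 / (4 * ε^4))
    (H L : Finset V)
    (hH : H = Finset.univ.filter (fun v => ε^2 * m / c ≤ (G.degree v : ℝ)))
    (hL : L = Finset.univ \ H)
    (hHL : (eBetween G H : ℝ) < (1/2 + ε^2) * m)
    (mL ΔL : ℕ)
    (hmL : mL = edgesWithin G L)
    (hΔL : ΔL = L.sup (fun v => ((G.neighborFinset v) ∩ L).card)) :
    (ΔL : ℝ) < ε^2 * δ / 4 * mL - 1 / (4 * ε^2) :=
  stmt19_general G ε δ hε0 hε hδ0 c hc m hm hm' H L hH hL hHL mL ΔL hmL hΔL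
end
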